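/- Let G be a graph, let t ≥ 1, and let s be a simplicial vertex of G with deg_G(s) < t − 1. Then G contains the complete graph K_t as a minor if and only if G − s (the graph obtained from G by deleting s) contains K_t as a minor. -/

import Mathlib

open SimpleGraph

universe u v

/-- `H` is a minor of `G`: there is a minor model assigning to each vertex of `H`
a nonempty branch set in `G`, pairwise disjoint, each inducing a connected subgraph,
with an edge of `G` between the branch sets of any two adjacent vertices of `H`. -/
def HasMinor {V : Type u} {W : Type v} (G : SimpleGraph V) (H : SimpleGraph W) : Prop :=
  ∃ φ : W → Set V,
    (∀ w, (φ w).Nonempty) ∧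
    (Pairwise fun w w' => Disjoint (φ w) (φ w')) ∧
    (∀ w, (G.induce (φ w)).Connected) ∧
    ∀ ⦃w w'⦄, H.Adj w w' → ∃ a ∈ φ w, ∃ b ∈ φ w', G.Adj a b

/-- `s` is a simplicial vertex of `G`: its open neighborhood induces a clique. -/
def IsSimplicial {V : Type*} (G : SimpleGraph V) (s : V) : Prop :=
  ∀ ⦃a b : V⦄, G.Adj s a → G.Adj s b → a ≠ b → G.Adj a b

/-!
If `s` lies in a branch set `B` of a `K_t` model, then `B ≠ {s}`: otherwise the other `t - 1`
branch sets would each contain a neighbour of `s`, and these are distinct. Hence removing `s`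
leaves every branch set nonempty. Since `N(s)` is a clique, a path through `s` can be
short-cut around it, so `B \ {s}` stays connected, and an edge from `s` to another branch set
can be rerouted through the neighbour of `s` inside `B`.
-/

noncomputable def SimpleGraph.induceInduceIso {V : Type u} (G : SimpleGraph V) (U : Set V)
    (T : Set U) : (G.induce U).induce T ≃g G.induce (Subtype.val '' T) where
  toEquiv := Equiv.Set.image Subtype.val T Subtype.val_injective
  map_rel_iff' := by simp [Equiv.Set.image, Equiv.Set.imageOfInjOn, comap_adj]

section

variable {V : Type u} {W : Type v} {G : SimpleGraph V} {H : SimpleGraph W}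

structure IsMinorModel (G : SimpleGraph V) (H : SimpleGraph W) (φ : W → Set V) : Prop where
  nonempty : ∀ w, (φ w).Nonempty
  pairwise_disjoint : Pairwise fun w w' => Disjoint (φ w) (φ w')
  connected : ∀ w, (G.induce (φ w)).Connected
  exists_adj : ∀ ⦃w w'⦄, H.Adj w w' → ∃ a ∈ φ w, ∃ b ∈ φ w', G.Adj a b

theorem hasMinor_iff_exists_isMinorModel : HasMinor G H ↔ ∃ φ, IsMinorModel G H φ :=
  ⟨fun ⟨φ, h₁, h₂, h₃, h₄⟩ => ⟨φ, h₁, h₂, h₃, h₄⟩, fun ⟨φ, h⟩ => ⟨φ, h.1, h.2, h.3, h.4⟩⟩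

theorem IsMinorModel.hasMinor_induce {φ : W → Set V} {U : Set V} (hφ : IsMinorModel G H φ)
    (hU : ∀ w, φ w ⊆ U) : HasMinor (G.induce U) H := by
  refine hasMinor_iff_exists_isMinorModel.2 ⟨fun w => Subtype.val ⁻¹' φ w, ?_, ?_, ?_, ?_⟩
  · intro w
    obtain ⟨x, hx⟩ := hφ.nonempty w
    exact ⟨⟨x, hU w hx⟩, hx⟩
  · intro w w' hww'
    exact (hφ.pairwise_disjoint hww').preimage _
  · intro w
    have himage : Subtype.val '' (Subtype.val ⁻¹' φ w : Set U) = φ w := by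
      rw [Subtype.image_preimage_coe, Set.inter_eq_self_of_subset_right (hU w)]
    rw [(G.induceInduceIso U _).connected_iff, himage]
    exact hφ.connected w
  · intro w w' hww'
    obtain ⟨a, ha, b, hb, hab⟩ := hφ.exists_adj hww'
    exact ⟨⟨a, hU w ha⟩, ha, ⟨b, hU w' hb⟩, hb, hab⟩

theorem HasMinor.of_induce {U : Set V} (h : HasMinor (G.induce U) H) : HasMinor G H := by
  obtain ⟨ψ, hψ⟩ := hasMinor_iff_exists_isMinorModel.1 h
  refine hasMinor_iff_exists_isMinorModel.2 ⟨fun w => Subtype.val '' ψ w, ?_, ?_, ?_, ?_⟩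
  · exact fun w => (hψ.nonempty w).image _
  · exact fun w w' hww' =>
      (Set.disjoint_image_iff Subtype.val_injective).2 (hψ.pairwise_disjoint hww')
  · exact fun w => (G.induceInduceIso U (ψ w)).connected_iff.1 (hψ.connected w)
  · intro w w' hww'
    obtain ⟨a, ha, b, hb, hab⟩ := hψ.exists_adj hww'
    exact ⟨a, ⟨a, ha, rfl⟩, b, ⟨b, hb, rfl⟩, hab⟩

theorem IsMinorModel.ncard_neighborSet_le {φ : W → Set V} {w : W} {s : V}
    (hφ : IsMinorModel G H φ) (hw : φ w = {s}) (hfin : (G.neighborSet s).Finite) :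
    (H.neighborSet w).ncard ≤ (G.neighborSet s).ncard := by
  have hnbr : ∀ w', ∃ a, H.Adj w w' → a ∈ φ w' ∧ G.Adj s a := by
    intro w'
    by_cases hww' : H.Adj w w'
    · obtain ⟨a, ha, b, hb, hab⟩ := hφ.exists_adj hww'
      rw [hw, Set.mem_singleton_iff] at ha
      exact ⟨b, fun _ => ⟨hb, ha ▸ hab⟩⟩
    · exact ⟨s, fun h => absurd h hww'⟩
  choose f hf using hnbr
  refine Set.ncard_le_ncard_of_injOn f (fun w' h => (hf w' h).2) ?_ hfin
  intro w₁ h₁ w₂ h₂ heq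
  by_contra hne
  exact Set.disjoint_left.1 (hφ.pairwise_disjoint hne) (hf w₁ h₁).1 (heq ▸ (hf w₂ h₂).1)

theorem exists_adj_mem_sdiff_of_connected_induce {S : Set V} {s : V}
    (hS : (G.induce S).Connected) (hs : s ∈ S) (hne : (S \ {s}).Nonempty) :
    ∃ c ∈ S \ {s}, G.Adj s c := by
  obtain ⟨x, hxS, hxs⟩ := hne
  have : Nontrivial S := ⟨⟨⟨s, hs⟩, ⟨x, hxS⟩, fun h => hxs (congrArg Subtype.val h).symm⟩⟩
  obtain ⟨⟨c, hcS⟩, hsc⟩ := hS.preconnected.exists_adj_of_nontrivial ⟨s, hs⟩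
  exact ⟨c, ⟨hcS, fun hcs => G.loopless.irrefl s (hcs ▸ hsc)⟩, hsc⟩

namespace IsSimplicial

variable {s : V}

/- Starting from a neighbour of `u` rather than `u` itself is what lets the induction step
over `u = s`, using that the neighbours of `s` are pairwise adjacent. -/
theorem reachable_induce_sdiff (hs : IsSimplicial G s) {S : Set V} {u v : S}
    (p : (G.induce S).Walk u v) (hv : (v : V) ≠ s) (a : V) (ha : a ∈ S \ {s})
    (hau : a = u ∨ G.Adj a u) :
    (G.induce (S \ {s})).Reachable ⟨a, ha⟩ ⟨v, v.2, hv⟩ := by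
  induction p generalizing a with
  | nil =>
    rcases hau with rfl | hav
    · rfl
    · exact Adj.reachable (G := G.induce (S \ {s})) hav
  | @cons u w v huw q ih =>
    rcases hau with rfl | hau
    · exact ih hv _ ha (Or.inr huw)
    by_cases hus : (u : V) = s
    · have hsa : G.Adj s a := hus ▸ hau.symm
      have hsw : G.Adj s w := hus ▸ huw
      by_cases haw : a = w
      · exact ih hv a ha (Or.inl haw)
      · exact ih hv a ha (Or.inr (hs hsa hsw haw))
    · have hau' : (G.induce (S \ {s})).Adj ⟨a, ha⟩ ⟨u, u.2, hus⟩ := hau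
      exact hau'.reachable.trans (ih hv u ⟨u.2, hus⟩ (Or.inr huw))

theorem connected_induce_sdiff (hs : IsSimplicial G s) {S : Set V}
    (hS : (G.induce S).Connected) (hne : (S \ {s}).Nonempty) : (G.induce (S \ {s})).Connected := by
  have : Nonempty (S \ {s} : Set V) := hne.to_subtype
  refine (connected_iff _).2 ⟨?_, this⟩
  rintro ⟨a, ha⟩ ⟨b, hb⟩
  obtain ⟨p⟩ := hS.preconnected ⟨a, ha.1⟩ ⟨b, hb.1⟩
  exact hs.reachable_induce_sdiff p hb.2 a ha (Or.inl rfl)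

theorem exists_adj_of_mem_sdiff (hs : IsSimplicial G s) {A B : Set V} {a b : V}
    (hA : (G.induce A).Connected) (hne : (A \ {s}).Nonempty) (hAB : Disjoint A B)
    (ha : a ∈ A) (hb : b ∈ B) (hab : G.Adj a b) : ∃ a' ∈ A \ {s}, G.Adj a' b := by
  by_cases has : a = s
  · subst has
    obtain ⟨c, hc, hac⟩ := exists_adj_mem_sdiff_of_connected_induce hA ha hne
    have hcb : c ≠ b := fun hcb => Set.disjoint_left.1 hAB hc.1 (hcb ▸ hb)
    exact ⟨c, hc, hs hac hab hcb⟩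
  · exact ⟨a, ⟨ha, has⟩, hab⟩

end IsSimplicial

theorem IsMinorModel.sdiff_singleton {φ : W → Set V} {s : V} (hφ : IsMinorModel G H φ)
    (hs : IsSimplicial G s) (hne : ∀ w, (φ w \ {s}).Nonempty) :
    IsMinorModel G H fun w => φ w \ {s} where
  nonempty := hne
  pairwise_disjoint _ _ hww' :=
    (hφ.pairwise_disjoint hww').mono Set.sdiff_subset Set.sdiff_subset
  connected w := hs.connected_induce_sdiff (hφ.connected w) (hne w)
  exists_adj w w' hww' := by
    obtain ⟨a, ha, b, hb, hab⟩ := hφ.exists_adj hww'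
    have hdisj := hφ.pairwise_disjoint hww'.ne
    obtain ⟨a', ha', ha'b⟩ :=
      hs.exists_adj_of_mem_sdiff (hφ.connected w) (hne w) hdisj ha hb hab
    obtain ⟨b', hb', hb'a'⟩ :=
      hs.exists_adj_of_mem_sdiff (hφ.connected w') (hne w') hdisj.symm hb ha'.1 ha'b.symm
    exact ⟨a', ha', b', hb', hb'a'.symm⟩

end

theorem stmt13_general {V : Type u} [Fintype V] (G : SimpleGraph V) (t : ℕ)
    (s : V) (hsimp : IsSimplicial G s)
    (hdeg : (G.neighborSet s).ncard < t - 1) :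
    HasMinor G (⊤ : SimpleGraph (Fin t)) ↔
      HasMinor (G.induce {x : V | x ≠ s}) (⊤ : SimpleGraph (Fin t)) := by
  refine ⟨fun h => ?_, HasMinor.of_induce⟩
  obtain ⟨φ, hφ⟩ := hasMinor_iff_exists_isMinorModel.1 h
  have hne : ∀ w, (φ w \ {s}).Nonempty := by
    intro w
    by_contra hempty
    have hw : φ w = {s} :=
      (Set.subset_singleton_iff_eq.1 (Set.sdiff_eq_empty.1 (Set.not_nonempty_iff_eq_empty.1
        hempty))).resolve_left (hφ.nonempty w).ne_empty
    have hle := hφ.ncard_neighborSet_le hw (Set.toFinite _)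
    rw [neighborSet_top, Set.ncard_compl, Set.ncard_singleton, Nat.card_fin] at hle
    omega
  exact (hφ.sdiff_singleton hsimp hne).hasMinor_induce fun w _ hx => hx.2

/-- If `s` is a simplicial vertex of `G` with `deg(s) < t - 1` (where `t ≥ 1`), then
`G` has a `K_t` minor iff the graph `G - s` obtained by deleting `s` does. -/
theorem stmt13 {V : Type u} [Fintype V] (G : SimpleGraph V) (t : ℕ) (ht : 1 ≤ t)
    (s : V) (hsimp : IsSimplicial G s)
    (hdeg : (G.neighborSet s).ncard < t - 1) :
    HasMinor G (⊤ : SimpleGraph (Fin t)) ↔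
      HasMinor (G.induce {x : V | x ≠ s}) (⊤ : SimpleGraph (Fin t)) :=
  stmt13_general G t s hsimp hdeg
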